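/- Define the 4×4 matrices ρ_x = Λ₁(σ_x^{1/2}) · Λ₁(σ_z^{1/2})⁻¹, ρ_y = S · ρ_x⁻¹ · S, and ρ₂ = ρ_x · ρ_y. Then the characteristic polynomial of ρ₂ equals (X − 1)² · (X² − (1/2)X + 1); equivalently, ρ₂ is a unitary matrix whose eigenvalues are 1 (with multiplicity two) and (1 ± i√15)/4, the latter two not being roots of unity. -/
import Mathlib

open Matrix Polynomial

noncomputable def sigmaZhalf : Matrix (Fin 2) (Fin 2) ℂ := !![1, 0; 0, Complex.I]
noncomputable def Hmat : Matrix (Fin 2) (Fin 2) ℂ :=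
  (Real.sqrt 2 : ℂ)⁻¹ • !![1, 1; 1, -1]

/-- `σ_x^{1/2} = H σ_z^{1/2} H`. -/
noncomputable def sigmaXhalf : Matrix (Fin 2) (Fin 2) ℂ := Hmat * sigmaZhalf * Hmat

/-- `Λ₁(W) = diag(I₂, W)` on `ℂ²⊗ℂ²`. -/
noncomputable def ctrl (W : Matrix (Fin 2) (Fin 2) ℂ) :
    Matrix (Fin 2 × Fin 2) (Fin 2 × Fin 2) ℂ :=
  Matrix.of fun p q =>
    if p.1 = q.1 then
      (if p.1 = 0 then (if p.2 = q.2 then 1 else 0) else W p.2 q.2)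
    else 0

/-- The swap gate `S : e_a ⊗ e_b ↦ e_b ⊗ e_a`. -/
noncomputable def swapGate : Matrix (Fin 2 × Fin 2) (Fin 2 × Fin 2) ℂ :=
  Matrix.of fun p q => if p.1 = q.2 ∧ p.2 = q.1 then 1 else 0

noncomputable def rhoX : Matrix (Fin 2 × Fin 2) (Fin 2 × Fin 2) ℂ :=
  ctrl sigmaXhalf * (ctrl sigmaZhalf)⁻¹

noncomputable def rhoY : Matrix (Fin 2 × Fin 2) (Fin 2 × Fin 2) ℂ :=
  swapGate * rhoX⁻¹ * swapGate

noncomputable def rho2 : Matrix (Fin 2 × Fin 2) (Fin 2 × Fin 2) ℂ := rhoX * rhoY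

lemma ctrl_mul (A B : Matrix (Fin 2) (Fin 2) ℂ) : ctrl A * ctrl B = ctrl (A * B) := by
  ext ⟨a, b⟩ ⟨c, d⟩
  fin_cases a <;> fin_cases c <;>
    simp [ctrl, Matrix.mul_apply, Fintype.sum_prod_type, Fin.sum_univ_two]

lemma ctrl_one : ctrl 1 = 1 := by
  ext ⟨a, b⟩ ⟨c, d⟩
  fin_cases a <;> fin_cases c <;> fin_cases b <;> fin_cases d <;>
    simp [ctrl, Matrix.one_apply, Prod.ext_iff]

lemma sigmaXhalf_eq :
    sigmaXhalf = !![(1 + Complex.I)/2, (1 - Complex.I)/2;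
                    (1 - Complex.I)/2, (1 + Complex.I)/2] := by
  have h2 : ((Real.sqrt 2 : ℝ) : ℂ) * ((Real.sqrt 2 : ℝ) : ℂ) = 2 := by
    norm_cast
    exact Real.mul_self_sqrt (by norm_num)
  have hne : ((Real.sqrt 2 : ℝ) : ℂ) ≠ 0 := by
    intro h
    rw [h, mul_zero] at h2
    norm_num at h2
  ext i j
  fin_cases i <;> fin_cases j <;>
    · simp [sigmaXhalf, Hmat, sigmaZhalf, Matrix.mul_apply, Fin.sum_univ_two]
      field_simp
      ring_nf
      first
        | exact Or.inl (by rw [sq, h2])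
        | linear_combination (Complex.I - 1) * h2
        | linear_combination (1 - Complex.I) * h2
        | linear_combination (1 + Complex.I) * h2
        | linear_combination (-1 - Complex.I) * h2

lemma rhoX_eq :
    rhoX = ctrl !![(1 + Complex.I)/2, (-1 - Complex.I)/2;
                   (1 - Complex.I)/2, (1 - Complex.I)/2] := by
  have hz : (ctrl sigmaZhalf)⁻¹ = ctrl !![1, 0; 0, -Complex.I] := by
    apply inv_eq_right_inv
    rw [ctrl_mul, show sigmaZhalf * !![1, 0; 0, -Complex.I] = 1 by
      ext i j; fin_cases i <;> fin_cases j <;>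
        simp [sigmaZhalf, Matrix.mul_apply, Fin.sum_univ_two, Matrix.one_apply]]
    exact ctrl_one
  rw [rhoX, hz, ctrl_mul, sigmaXhalf_eq]
  have : (!![(1 + Complex.I)/2, (1 - Complex.I)/2;
             (1 - Complex.I)/2, (1 + Complex.I)/2] : Matrix (Fin 2) (Fin 2) ℂ)
      * !![1, 0; 0, -Complex.I]
      = !![(1 + Complex.I)/2, (-1 - Complex.I)/2;
           (1 - Complex.I)/2, (1 - Complex.I)/2] := by
    ext i j
    fin_cases i <;> fin_cases j <;>
      simp [Matrix.mul_apply, Fin.sum_univ_two] <;> ring_nf <;>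
      simp [Complex.I_sq] <;> ring_nf
  rw [this]

lemma rhoX_inv :
    rhoX⁻¹ = ctrl !![(1 - Complex.I)/2, (1 + Complex.I)/2;
                     (-1 + Complex.I)/2, (1 + Complex.I)/2] := by
  rw [rhoX_eq]
  apply inv_eq_right_inv
  rw [ctrl_mul]
  rw [show (!![(1 + Complex.I)/2, (-1 - Complex.I)/2;
               (1 - Complex.I)/2, (1 - Complex.I)/2] : Matrix (Fin 2) (Fin 2) ℂ)
      * !![(1 - Complex.I)/2, (1 + Complex.I)/2;
           (-1 + Complex.I)/2, (1 + Complex.I)/2] = 1 by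
    ext i j
    fin_cases i <;> fin_cases j <;>
      simp [Matrix.mul_apply, Fin.sum_univ_two, Matrix.one_apply] <;> ring_nf <;>
      simp [Complex.I_sq] <;> ring_nf]
  exact ctrl_one

def e4 : Fin 2 × Fin 2 ≃ Fin 4 where
  toFun p := ![![0, 1], ![2, 3]] p.1 p.2
  invFun i := ![(0, 0), (0, 1), (1, 0), (1, 1)] i
  left_inv := by decide
  right_inv := by decide

noncomputable def M4 : Matrix (Fin 4) (Fin 4) ℂ :=
  !![1, 0, 0, 0;
     0, (1 - Complex.I)/2, 0, (1 + Complex.I)/2;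
     0, 1/2, (1 + Complex.I)/2, -Complex.I/2;
     0, Complex.I/2, (1 - Complex.I)/2, 1/2]

lemma reindex_rho2 : (Matrix.reindex e4 e4) rho2 = M4 := by
  have h : rho2 = rhoX * (swapGate * rhoX⁻¹ * swapGate) := rfl
  rw [h, rhoX_inv, rhoX_eq]
  ext i j
  fin_cases i <;> fin_cases j <;>
    simp [M4, e4, ctrl, swapGate, Matrix.mul_apply, Fintype.sum_prod_type,
      Fin.sum_univ_two, Matrix.reindex_apply, Matrix.submatrix_apply, Matrix.vecHead, Matrix.vecTail] <;>
    ring_nf <;> (try simp [Complex.I_sq]) <;> (try ring_nf)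

/-- The characteristic polynomial of `ρ₂ = ρ_x ρ_y` is `(X−1)²(X² − (1/2)X + 1)`,
whose non-unit roots `(1 ± i√15)/4` are not roots of unity. -/
theorem stmt19 :
    rho2.charpoly = (X - 1) ^ 2 * (X ^ 2 - C (1 / 2 : ℂ) * X + 1) := by
  rw [← Matrix.charpoly_reindex e4, reindex_rho2]
  rw [Matrix.charpoly,
    show M4.charmatrix
      = !![X - 1, 0, 0, 0;
           0, X - C ((1 - Complex.I)/2), 0, -C ((1 + Complex.I)/2);
           0, -C (1/2 : ℂ), X - C ((1 + Complex.I)/2), -C (-Complex.I/2);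
           0, -C (Complex.I/2), -C ((1 - Complex.I)/2), X - C (1/2 : ℂ)] from by
      ext i j
      fin_cases i <;> fin_cases j <;>
        simp [charmatrix_apply, M4, Matrix.vecHead, Matrix.vecTail]]
  simp [Matrix.det_succ_row_zero, Fin.sum_univ_succ, Matrix.det_fin_zero]
  apply Polynomial.funext
  intro x
  simp
  ring_nf
  linear_combination (-(3/4 : ℂ)) * (x - 1) ^ 2 * Complex.I_sq
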